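/- arXiv:math/0701510 — 2 statements merged into one kernel-verified Lean document; each statement's English description precedes it below -/
import Mathlib

section
/- Let f : ℍ → ℍ be of class C¹ on an open set of quaternions with nonzero imaginary part, let p = t + r·ι(α,β) with r > 0 and sin β ≠ 0, and define F(t,r,α,β) = f(t + r·ι(α,β)). Then the left Fueter operator satisfies (D_l f)(p) = ∂F/∂t + ι(α,β)·(∂F/∂r) − (1/r)·(∂F/∂ιₗ). -/
open Quaternion

noncomputable section

/-- The basis quaternion `i`. -/
def qi : ℍ[ℝ] := ⟨0,1,0,0⟩
/-- The basis quaternion `j`. -/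
def qj : ℍ[ℝ] := ⟨0,0,1,0⟩
/-- The basis quaternion `k`. -/
def qk : ℍ[ℝ] := ⟨0,0,0,1⟩

/-- Partial derivative of `f : ℍ → ℍ` in the real (`t`) direction. -/
def pt (f : ℍ[ℝ] → ℍ[ℝ]) (p : ℍ[ℝ]) : ℍ[ℝ] := fderiv ℝ f p 1
/-- Partial derivative in the `i` (`x`) direction. -/
def px (f : ℍ[ℝ] → ℍ[ℝ]) (p : ℍ[ℝ]) : ℍ[ℝ] := fderiv ℝ f p qi
/-- Partial derivative in the `j` (`y`) direction. -/
def py (f : ℍ[ℝ] → ℍ[ℝ]) (p : ℍ[ℝ]) : ℍ[ℝ] := fderiv ℝ f p qj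
/-- Partial derivative in the `k` (`z`) direction. -/
def pz (f : ℍ[ℝ] → ℍ[ℝ]) (p : ℍ[ℝ]) : ℍ[ℝ] := fderiv ℝ f p qk

/-- The left Fueter operator `D_l f = ∂f/∂t + i ∂f/∂x + j ∂f/∂y + k ∂f/∂z`. -/
def Dl (f : ℍ[ℝ] → ℍ[ℝ]) (p : ℍ[ℝ]) : ℍ[ℝ] :=
  pt f p + qi * px f p + qj * py f p + qk * pz f p
/-- The right Fueter operator `D_r f = ∂f/∂t + (∂f/∂x) i + (∂f/∂y) j + (∂f/∂z) k`. -/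
def Dr (f : ℍ[ℝ] → ℍ[ℝ]) (p : ℍ[ℝ]) : ℍ[ℝ] :=
  pt f p + px f p * qi + py f p * qj + pz f p * qk
/-- The conjugate left Fueter operator `D̄_l f = ∂f/∂t - i ∂f/∂x - j ∂f/∂y - k ∂f/∂z`. -/
def Dlbar (f : ℍ[ℝ] → ℍ[ℝ]) (p : ℍ[ℝ]) : ℍ[ℝ] :=
  pt f p - qi * px f p - qj * py f p - qk * pz f p
/-- The Laplacian `Δf = ∂²f/∂t² + ∂²f/∂x² + ∂²f/∂y² + ∂²f/∂z²`. -/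
def Lap (f : ℍ[ℝ] → ℍ[ℝ]) (p : ℍ[ℝ]) : ℍ[ℝ] :=
  pt (pt f) p + px (px f) p + py (py f) p + pz (pz f) p

/-- `r = √(x² + y² + z²)`, the norm of the imaginary part of `p`. -/
def rad (p : ℍ[ℝ]) : ℝ := Real.sqrt (p.imI^2 + p.imJ^2 + p.imK^2)
/-- `ι(p) = (x i + y j + z k)/r`, the normalized imaginary part of `p`. -/
def iot (p : ℍ[ℝ]) : ℍ[ℝ] := (rad p)⁻¹ • Quaternion.im p

/-- `ι(α,β) = cos α sin β · i + sin α sin β · j + cos β · k`, a unit imaginary quaternion. -/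
def iota (α β : ℝ) : ℍ[ℝ] :=
  ⟨0, Real.cos α * Real.sin β, Real.sin α * Real.sin β, Real.cos β⟩
/-- `ι_α = ∂ι/∂α`. -/
def iotaA (α β : ℝ) : ℍ[ℝ] := deriv (fun a => iota a β) α
/-- `ι_β = ∂ι/∂β`. -/
def iotaB (α β : ℝ) : ℍ[ℝ] := deriv (fun b => iota α b) β

/-- Partial derivative in `α` of a quaternion-valued function of `(α,β)`. -/
def pA (g : ℝ → ℝ → ℍ[ℝ]) (α β : ℝ) : ℍ[ℝ] := deriv (fun a => g a β) α
/-- Partial derivative in `β` of a quaternion-valued function of `(α,β)`. -/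
def pB (g : ℝ → ℝ → ℍ[ℝ]) (α β : ℝ) : ℍ[ℝ] := deriv (fun b => g α b) β
/-- The left angular derivative `∂g/∂ιₗ := ι_α⁻¹ (∂g/∂α) + ι_β⁻¹ (∂g/∂β)`. -/
def DI (g : ℝ → ℝ → ℍ[ℝ]) (α β : ℝ) : ℍ[ℝ] :=
  (iotaA α β)⁻¹ * pA g α β + (iotaB α β)⁻¹ * pB g α β

/-!
By the chain rule every partial derivative of `F` is the differential `L = df(p)` applied to the
velocity of the corresponding coordinate curve: `L 1`, `L ι`, `r L ι_α` and `r L ι_β`. Writing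
`ι_α = sin β · e_α` with `e_α = azimuthalUnit α` and using `u⁻¹ = -u` for the unit imaginary
quaternions `e_α` and `ι_β`, the right-hand side becomes `∑ u L(u)` over the orthonormal frame
`(1, ι, e_α, ι_β)` of `ℍ`, while `D_l f(p)` is the same sum over `(1, i, j, k)`. For any bilinear
map `B`, the sum `∑ B(u, u)` over an orthonormal basis does not depend on the basis.
-/

theorem OrthonormalBasis.sum_apply_self_eq {ι κ E F : Type*} [Fintype ι] [Fintype κ]
    [NormedAddCommGroup E] [InnerProductSpace ℝ E] [AddCommGroup F] [Module ℝ F]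
    (b : OrthonormalBasis ι ℝ E) (b' : OrthonormalBasis κ ℝ E) (B : E →ₗ[ℝ] E →ₗ[ℝ] F) :
    ∑ i, B (b i) (b i) = ∑ j, B (b' j) (b' j) := by
  calc ∑ i, B (b i) (b i)
      = ∑ i, B (b i) (∑ j, inner ℝ (b' j) (b i) • b' j) := by simp only [b'.sum_repr']
    _ = ∑ j, B (∑ i, inner ℝ (b i) (b' j) • b i) (b' j) := by
        simp only [map_sum, map_smul, LinearMap.sum_apply, LinearMap.smul_apply, real_inner_comm]
        exact Finset.sum_comm
    _ = ∑ j, B (b' j) (b' j) := by simp only [b.sum_repr']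

def orthonormalBasisOfOrthonormalOfCardEqFinrank {𝕜 E ι : Type*} [RCLike 𝕜]
    [NormedAddCommGroup E] [InnerProductSpace 𝕜 E] [FiniteDimensional 𝕜 E] [Fintype ι]
    {v : ι → E} (hv : Orthonormal 𝕜 v) (hcard : Fintype.card ι = Module.finrank 𝕜 E) :
    OrthonormalBasis ι 𝕜 E :=
  OrthonormalBasis.mk hv (hv.linearIndependent.span_eq_top_of_card_eq_finrank' hcard).ge

@[simp]
theorem coe_orthonormalBasisOfOrthonormalOfCardEqFinrank {𝕜 E ι : Type*} [RCLike 𝕜]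
    [NormedAddCommGroup E] [InnerProductSpace 𝕜 E] [FiniteDimensional 𝕜 E] [Fintype ι]
    {v : ι → E} (hv : Orthonormal 𝕜 v) (hcard : Fintype.card ι = Module.finrank 𝕜 E) :
    ⇑(orthonormalBasisOfOrthonormalOfCardEqFinrank hv hcard) = v :=
  OrthonormalBasis.coe_mk _ _

theorem Quaternion.sum_mul_apply_self_eq {v w : Fin 4 → ℍ[ℝ]} (hv : Orthonormal ℝ v)
    (hw : Orthonormal ℝ w) (L : ℍ[ℝ] →ₗ[ℝ] ℍ[ℝ]) :
    ∑ i, v i * L (v i) = ∑ i, w i * L (w i) := by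
  have hcard : Fintype.card (Fin 4) = Module.finrank ℝ ℍ[ℝ] := by
    rw [Fintype.card_fin, Quaternion.finrank_eq_four]
  simpa using OrthonormalBasis.sum_apply_self_eq
    (orthonormalBasisOfOrthonormalOfCardEqFinrank hv hcard)
    (orthonormalBasisOfOrthonormalOfCardEqFinrank hw hcard) ((LinearMap.mul ℝ ℍ[ℝ]).compl₂ L)

theorem Quaternion.inner_eq_sum_mul (a b : ℍ[ℝ]) :
    inner ℝ a b = a.re * b.re + a.imI * b.imI + a.imJ * b.imJ + a.imK * b.imK := by
  rw [Quaternion.inner_def, Quaternion.re_mul]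
  simp only [Quaternion.re_star, Quaternion.imI_star, Quaternion.imJ_star, Quaternion.imK_star]
  ring

theorem Quaternion.hasDerivAt_coe (t : ℝ) : HasDerivAt (fun s : ℝ => (s : ℍ[ℝ])) 1 t := by
  simpa [Algebra.smul_def] using (hasDerivAt_id t).smul_const (1 : ℍ[ℝ])

theorem inv_eq_neg_of_mul_self_eq_neg_one {R : Type*} [DivisionRing R] {u : R}
    (hu : u * u = -1) : u⁻¹ = -u :=
  inv_eq_of_mul_eq_one_right (by rw [mul_neg, hu, neg_neg])

theorem inv_smul_eq_neg_inv_smul {K A : Type*} [Field K] [DivisionRing A] [Algebra K A] {u : A}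
    (hu : u * u = -1) (c : K) : (c • u)⁻¹ = -(c⁻¹ • u) := by
  rcases eq_or_ne c 0 with rfl | hc
  · simp
  · refine inv_eq_of_mul_eq_one_right ?_
    rw [mul_neg, smul_mul_smul_comm, hu, mul_inv_cancel₀ hc, smul_neg, one_smul, neg_neg]

def azimuthalUnit (α : ℝ) : ℍ[ℝ] := ⟨0, -Real.sin α, Real.cos α, 0⟩

def polarUnit (α β : ℝ) : ℍ[ℝ] :=
  ⟨0, Real.cos α * Real.cos β, Real.sin α * Real.cos β, -Real.sin β⟩

theorem azimuthalUnit_mul_self (α : ℝ) : azimuthalUnit α * azimuthalUnit α = -1 := by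
  ext <;> simp only [Quaternion.re_mul, Quaternion.imI_mul, Quaternion.imJ_mul, Quaternion.imK_mul] <;>
    simp [azimuthalUnit] <;> grind [Real.sin_sq_add_cos_sq]

theorem polarUnit_mul_self (α β : ℝ) : polarUnit α β * polarUnit α β = -1 := by
  ext <;> simp only [Quaternion.re_mul, Quaternion.imI_mul, Quaternion.imJ_mul, Quaternion.imK_mul] <;>
    simp [polarUnit] <;> grind [Real.sin_sq_add_cos_sq]

theorem iota_eq_sum_smul (α β : ℝ) : iota α β
    = (Real.cos α * Real.sin β) • qi + (Real.sin α * Real.sin β) • qj + Real.cos β • qk := by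
  ext <;> simp [iota] <;> simp [qi, qj, qk]

theorem hasDerivAt_iota_left (α β : ℝ) :
    HasDerivAt (fun a => iota a β) (Real.sin β • azimuthalUnit α) α := by
  simp only [iota_eq_sum_smul]
  refine ((((Real.hasDerivAt_cos α).mul_const (Real.sin β)).smul_const qi).add
    (((Real.hasDerivAt_sin α).mul_const (Real.sin β)).smul_const qj)).add_const
    (Real.cos β • qk) |>.congr_deriv ?_
  ext <;> simp <;> simp [azimuthalUnit, qi, qj] <;> ring

theorem hasDerivAt_iota_right (α β : ℝ) :
    HasDerivAt (fun b => iota α b) (polarUnit α β) β := by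
  simp only [iota_eq_sum_smul]
  refine ((((Real.hasDerivAt_sin β).const_mul (Real.cos α)).smul_const qi).add
    (((Real.hasDerivAt_sin β).const_mul (Real.sin α)).smul_const qj)).add
    ((Real.hasDerivAt_cos β).smul_const qk) |>.congr_deriv ?_
  ext <;> simp [polarUnit] <;> simp [qi, qj, qk]

theorem iotaA_eq (α β : ℝ) : iotaA α β = Real.sin β • azimuthalUnit α :=
  (hasDerivAt_iota_left α β).deriv

theorem iotaB_eq (α β : ℝ) : iotaB α β = polarUnit α β :=
  (hasDerivAt_iota_right α β).deriv

theorem orthonormal_standardFrame : Orthonormal ℝ ![1, qi, qj, qk] := by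
  rw [orthonormal_iff_ite]
  intro i j
  fin_cases i <;> fin_cases j <;> rw [Quaternion.inner_eq_sum_mul] <;> simp [qi, qj, qk]

theorem orthonormal_sphericalFrame (α β : ℝ) :
    Orthonormal ℝ ![1, iota α β, azimuthalUnit α, polarUnit α β] := by
  rw [orthonormal_iff_ite]
  intro i j
  fin_cases i <;> fin_cases j <;> rw [Quaternion.inner_eq_sum_mul] <;>
    simp [iota, azimuthalUnit, polarUnit] <;> grind [Real.sin_sq_add_cos_sq]

theorem fueter_operator_spherical_general (Ω : Set ℍ[ℝ]) (hΩ : IsOpen Ω)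
    (f : ℍ[ℝ] → ℍ[ℝ]) (hf : ContDiffOn ℝ 1 f Ω)
    (t r α β : ℝ) (hr : 0 < r) (hβ : Real.sin β ≠ 0)
    (hp : (t : ℍ[ℝ]) + r • iota α β ∈ Ω) :
    Dl f ((t : ℍ[ℝ]) + r • iota α β)
      = deriv (fun s : ℝ => f ((s : ℍ[ℝ]) + r • iota α β)) t
        + iota α β * deriv (fun s : ℝ => f ((t : ℍ[ℝ]) + s • iota α β)) r
        - r⁻¹ • ((iotaA α β)⁻¹ * deriv (fun a => f ((t : ℍ[ℝ]) + r • iota a β)) α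
                 + (iotaB α β)⁻¹ * deriv (fun b => f ((t : ℍ[ℝ]) + r • iota α b)) β) := by
  set p : ℍ[ℝ] := (t : ℍ[ℝ]) + r • iota α β
  have hL : HasFDerivAt f (fderiv ℝ f p) p :=
    ((hf.differentiableOn one_ne_zero).differentiableAt (hΩ.mem_nhds hp)).hasFDerivAt
  set L := fderiv ℝ f p
  have chain {g : ℝ → ℍ[ℝ]} {g' : ℍ[ℝ]} {x : ℝ} (hg : HasDerivAt g g' x) (hgx : g x = p) :
      deriv (fun s => f (g s)) x = L g' :=
    (hL.comp_hasDerivAt_of_eq x hg hgx.symm).deriv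
  rw [chain ((Quaternion.hasDerivAt_coe t).add_const _) rfl,
    chain (((hasDerivAt_id' r).smul_const (iota α β)).const_add _) rfl,
    chain (g := fun a => (t : ℍ[ℝ]) + r • iota a β)
      (((hasDerivAt_iota_left α β).const_smul r).const_add _) rfl,
    chain (g := fun b => (t : ℍ[ℝ]) + r • iota α b)
      (((hasDerivAt_iota_right α β).const_smul r).const_add _) rfl,
    iotaA_eq, iotaB_eq, inv_smul_eq_neg_inv_smul (azimuthalUnit_mul_self α),
    inv_eq_neg_of_mul_self_eq_neg_one (polarUnit_mul_self α β)]
  have frames := Quaternion.sum_mul_apply_self_eq orthonormal_standardFrame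
    (orthonormal_sphericalFrame α β) L
  simp only [Fin.sum_univ_four, Matrix.cons_val, one_mul, ContinuousLinearMap.coe_coe] at frames
  change L 1 + qi * L qi + qj * L qj + qk * L qk = _
  rw [frames]
  simp only [map_smul, one_smul, mul_smul_comm, smul_mul_assoc, neg_mul, smul_smul, smul_neg,
    smul_add]
  match_scalars <;> field_simp

/-- For `f : ℍ → ℍ` of class `C¹` on an open set of quaternions with nonzero
imaginary part, writing `p = t + r ι(α,β)` with `r > 0` and `sin β ≠ 0`, and
`F(t,r,α,β) = f(t + r ι(α,β))`, the left Fueter operator in the coordinates `(t,r,α,β)` is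
`D_l f = ∂F/∂t + ι ∂F/∂r - (1/r) ∂F/∂ιₗ`. -/
theorem fueter_operator_spherical (Ω : Set ℍ[ℝ]) (hΩ : IsOpen Ω)
    (hΩim : ∀ p ∈ Ω, Quaternion.im p ≠ 0)
    (f : ℍ[ℝ] → ℍ[ℝ]) (hf : ContDiffOn ℝ 1 f Ω)
    (t r α β : ℝ) (hr : 0 < r) (hβ : Real.sin β ≠ 0)
    (hp : (t : ℍ[ℝ]) + r • iota α β ∈ Ω) :
    Dl f ((t : ℍ[ℝ]) + r • iota α β)
      = deriv (fun s : ℝ => f ((s : ℍ[ℝ]) + r • iota α β)) t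
        + iota α β * deriv (fun s : ℝ => f ((t : ℍ[ℝ]) + s • iota α β)) r
        - r⁻¹ • ((iotaA α β)⁻¹ * deriv (fun a => f ((t : ℍ[ℝ]) + r • iota a β)) α
                 + (iotaB α β)⁻¹ * deriv (fun b => f ((t : ℍ[ℝ]) + r • iota α b)) β) :=
  fueter_operator_spherical_general Ω hΩ f hf t r α β hr hβ hp
end
end

section
/- Let f : ℍ → ℍ be of class C² on an open set Ω of quaternions with nonzero imaginary part, of the form f(p) = u(p) + ι(p)·v(p) with u, v real-valued, and suppose D_l f = −2v/r on Ω. Then, writing quaternions in the form p = t + r·ι(α,β) and regarding u, v, f as functions of (t,r,α,β), the conjugate left Fueter operator applied to the real-valued function v/r satisfies D̄_l(v/r) = −(ι/r)·(∂f/∂t) + (ι/r²)·v + (1/r²)·(∂v/∂ιₗ). -/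
open Quaternion

noncomputable section

/-!
Write `f = u + w · im q` with `w = v / r`. The real part of `D_l f = -2w` reads
`∂u/∂t = r ∂w/∂r + w`, and substituting this into the right-hand side leaves
`∂w/∂t + ι⁻¹ ∂_ι w + ι_α⁻¹ ∂_{ι_α} w + ι_β⁻¹ ∂_{ι_β} w`, with directional derivatives of `w`.
Since `ι, ι_α, ι_β` is an orthogonal frame of the imaginary quaternions and `e⁻¹ = -e / |e|²`
for imaginary `e`, the last three terms add up to `-(i ∂w/∂x + j ∂w/∂y + k ∂w/∂z)`, which is
`D̄_l w - ∂w/∂t`.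
-/

open Topology

namespace Quaternion

lemma coe_eq_smul_one (x : ℝ) : (x : ℍ[ℝ]) = x • (1 : ℍ[ℝ]) := by
  rw [← coe_mul_eq_smul, mul_one]

lemma inv_of_re_eq_zero {x : ℍ[ℝ]} (hx : x.re = 0) : x⁻¹ = -(normSq x)⁻¹ • x := by
  rw [inv_def, star_eq_neg.mpr hx, smul_neg, neg_smul]

lemma re_coe_add_smul_im (a b : ℝ) (q : ℍ[ℝ]) : ((a : ℍ[ℝ]) + b • im q).re = a := by
  simp

lemma inner_coe_add_smul_im_im (a b : ℝ) (q : ℍ[ℝ]) :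
    inner ℝ ((a : ℍ[ℝ]) + b • im q) (im q) = b * ‖im q‖ ^ 2 := by
  rw [inner_add_left, inner_smul_left, real_inner_self_eq_norm_sq, inner_def,
    star_eq_neg.mpr (re_im q), coe_mul_eq_smul]
  simp

def reCLM : ℍ[ℝ] →L[ℝ] ℝ :=
  LinearMap.toContinuousLinearMap
    { toFun := QuaternionAlgebra.re, map_add' := re_add, map_smul' := fun c q => re_smul q c }

@[simp] lemma reCLM_apply (q : ℍ[ℝ]) : reCLM q = q.re := rfl

def imCLM : ℍ[ℝ] →L[ℝ] ℍ[ℝ] :=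
  LinearMap.toContinuousLinearMap
    { toFun := im, map_add' := im_add, map_smul' := fun c q => im_smul q c }

@[simp] lemma imCLM_apply (q : ℍ[ℝ]) : imCLM q = im q := rfl

lemma hasDerivAt_coe_comp {φ : ℝ → ℝ} {φ' x : ℝ} (h : HasDerivAt φ φ' x) :
    HasDerivAt (fun a => (φ a : ℍ[ℝ])) (φ' : ℍ[ℝ]) x := by
  simp_rw [coe_eq_smul_one]
  exact h.smul_const 1

end Quaternion

open Quaternion

@[simp] lemma re_qi : qi.re = 0 := rfl
@[simp] lemma imI_qi : qi.imI = 1 := rfl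
@[simp] lemma imJ_qi : qi.imJ = 0 := rfl
@[simp] lemma imK_qi : qi.imK = 0 := rfl
@[simp] lemma re_qj : qj.re = 0 := rfl
@[simp] lemma imI_qj : qj.imI = 0 := rfl
@[simp] lemma imJ_qj : qj.imJ = 1 := rfl
@[simp] lemma imK_qj : qj.imK = 0 := rfl
@[simp] lemma re_qk : qk.re = 0 := rfl
@[simp] lemma imI_qk : qk.imI = 0 := rfl
@[simp] lemma imJ_qk : qk.imJ = 0 := rfl
@[simp] lemma imK_qk : qk.imK = 1 := rfl

lemma eq_basis (q : ℍ[ℝ]) : q = q.re • (1 : ℍ[ℝ]) + q.imI • qi + q.imJ • qj + q.imK • qk := by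
  ext <;> simp

lemma im_eq_basis (q : ℍ[ℝ]) : im q = q.imI • qi + q.imJ • qj + q.imK • qk := by
  ext <;> simp

lemma map_eq_basis_of_re_eq_zero (W : ℍ[ℝ] →L[ℝ] ℝ) {x : ℍ[ℝ]} (hx : x.re = 0) :
    W x = x.imI * W qi + x.imJ * W qj + x.imK * W qk := by
  conv_lhs => rw [eq_basis x, hx]
  simp

lemma rad_eq_norm_im (q : ℍ[ℝ]) : rad q = ‖im q‖ := by
  rw [rad, norm_eq_sqrt_real_inner, inner_self, normSq_def']
  simp

lemma iot_mul_coe (q : ℍ[ℝ]) (c : ℝ) : iot q * (c : ℍ[ℝ]) = (c / rad q) • im q := by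
  rw [mul_coe_eq_smul, iot, smul_smul, div_eq_mul_inv]

def gradIm (W : ℍ[ℝ] →L[ℝ] ℝ) : ℍ[ℝ] := W qi • qi + W qj • qj + W qk • qk

@[simp] lemma re_iota (a b : ℝ) : (iota a b).re = 0 := rfl
@[simp] lemma imI_iota (a b : ℝ) : (iota a b).imI = Real.cos a * Real.sin b := rfl
@[simp] lemma imJ_iota (a b : ℝ) : (iota a b).imJ = Real.sin a * Real.sin b := rfl
@[simp] lemma imK_iota (a b : ℝ) : (iota a b).imK = Real.cos b := rfl

lemma im_iota (a b : ℝ) : im (iota a b) = iota a b := by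
  ext <;> simp

lemma im_coe_add_smul_iota (t r a b : ℝ) : im ((t : ℍ[ℝ]) + r • iota a b) = r • iota a b := by
  ext <;> simp

lemma normSq_iota (a b : ℝ) : normSq (iota a b) = 1 := by
  simp [normSq_def', mul_pow, ← add_mul]

lemma norm_iota (a b : ℝ) : ‖iota a b‖ = 1 := by
  rw [norm_eq_sqrt_real_inner, inner_self, normSq_iota, Real.sqrt_one]

lemma iota_mul_self (a b : ℝ) : iota a b * iota a b = -1 := by
  rw [← sq, ← im_iota, im_sq, im_iota, normSq_iota, coe_one]

lemma inv_iota (a b : ℝ) : (iota a b)⁻¹ = -iota a b := by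
  rw [inv_of_re_eq_zero (re_iota a b), normSq_iota, inv_one, neg_smul, one_smul]

lemma rad_coe_add_smul_iota (t : ℝ) {r : ℝ} (hr : 0 ≤ r) (a b : ℝ) :
    rad ((t : ℍ[ℝ]) + r • iota a b) = r := by
  rw [rad_eq_norm_im, im_coe_add_smul_iota, norm_smul, norm_iota, mul_one, Real.norm_of_nonneg hr]

lemma iota_eq_basis (a b : ℝ) :
    iota a b
      = (Real.cos a * Real.sin b) • qi + (Real.sin a * Real.sin b) • qj + Real.cos b • qk := by
  rw [← im_iota, im_eq_basis]
  simp

lemma hasDerivAt_iota_fst (a b : ℝ) :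
    HasDerivAt (fun x => iota x b)
      ((-Real.sin a * Real.sin b) • qi + (Real.cos a * Real.sin b) • qj) a := by
  simp_rw [iota_eq_basis]
  simpa using ((((Real.hasDerivAt_cos a).mul_const (Real.sin b)).smul_const qi).add
    (((Real.hasDerivAt_sin a).mul_const (Real.sin b)).smul_const qj)).add_const (Real.cos b • qk)

lemma hasDerivAt_iota_snd (a b : ℝ) :
    HasDerivAt (fun y => iota a y)
      ((Real.cos a * Real.cos b) • qi + (Real.sin a * Real.cos b) • qj - Real.sin b • qk) b := by
  simp_rw [iota_eq_basis]
  simpa [sub_eq_add_neg] using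
    ((((Real.hasDerivAt_sin b).const_mul (Real.cos a)).smul_const qi).fun_add
    (((Real.hasDerivAt_sin b).const_mul (Real.sin a)).smul_const qj)).fun_add
    ((Real.hasDerivAt_cos b).smul_const qk)

lemma iotaA_eq_s18 (a b : ℝ) :
    iotaA a b = (-Real.sin a * Real.sin b) • qi + (Real.cos a * Real.sin b) • qj :=
  (hasDerivAt_iota_fst a b).deriv

lemma iotaB_eq_s18 (a b : ℝ) :
    iotaB a b = (Real.cos a * Real.cos b) • qi + (Real.sin a * Real.cos b) • qj - Real.sin b • qk :=
  (hasDerivAt_iota_snd a b).deriv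

lemma normSq_iotaA (a b : ℝ) : normSq (iotaA a b) = Real.sin b ^ 2 := by
  simp [normSq_def', iotaA_eq_s18, mul_pow, ← add_mul]

lemma normSq_iotaB (a b : ℝ) : normSq (iotaB a b) = 1 := by
  simp [normSq_def', iotaB_eq_s18, mul_pow, ← add_mul]

lemma smul_inv_frame_sum_eq_neg_gradIm (W : ℍ[ℝ] →L[ℝ] ℝ) (α : ℝ) {β : ℝ}
    (hβ : Real.sin β ≠ 0) :
    W (iota α β) • (iota α β)⁻¹ + W (iotaA α β) • (iotaA α β)⁻¹
      + W (iotaB α β) • (iotaB α β)⁻¹ = -gradIm W := by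
  have hA : (iotaA α β).re = 0 := by simp [iotaA_eq_s18]
  have hB : (iotaB α β).re = 0 := by simp [iotaB_eq_s18]
  rw [inv_of_re_eq_zero (re_iota α β), inv_of_re_eq_zero hA, inv_of_re_eq_zero hB,
    normSq_iota, normSq_iotaA, normSq_iotaB, iotaA_eq_s18, iotaB_eq_s18, iota_eq_basis, gradIm]
  simp only [map_add, map_sub, map_smul, smul_eq_mul]
  match_scalars <;> field_simp <;> ring_nf <;> simp only [Real.cos_sq'] <;> ring_nf

section AngularDerivative

variable {g : ℍ[ℝ] → ℝ} {G : ℍ[ℝ] →L[ℝ] ℝ} {t r α β : ℝ}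

lemma pA_coe_comp_sphere (hg : HasFDerivAt g G ((t : ℍ[ℝ]) + r • iota α β)) :
    pA (fun a b => (g ((t : ℍ[ℝ]) + r • iota a b) : ℍ[ℝ])) α β
      = ((r * G (iotaA α β) : ℝ) : ℍ[ℝ]) := by
  have hcurve : HasDerivAt (fun a => (t : ℍ[ℝ]) + r • iota a β) (r • iotaA α β) α := by
    rw [iotaA_eq_s18]
    exact ((hasDerivAt_iota_fst α β).const_smul r).const_add _
  have h : HasDerivAt (fun a => (g ((t : ℍ[ℝ]) + r • iota a β) : ℍ[ℝ])) (G (r • iotaA α β)) α :=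
    hasDerivAt_coe_comp (hg.comp_hasDerivAt α hcurve)
  rw [pA, h.deriv, map_smul, smul_eq_mul]

lemma pB_coe_comp_sphere (hg : HasFDerivAt g G ((t : ℍ[ℝ]) + r • iota α β)) :
    pB (fun a b => (g ((t : ℍ[ℝ]) + r • iota a b) : ℍ[ℝ])) α β
      = ((r * G (iotaB α β) : ℝ) : ℍ[ℝ]) := by
  have hcurve : HasDerivAt (fun b => (t : ℍ[ℝ]) + r • iota α b) (r • iotaB α β) β := by
    rw [iotaB_eq_s18]
    exact ((hasDerivAt_iota_snd α β).const_smul r).const_add _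
  have h : HasDerivAt (fun b => (g ((t : ℍ[ℝ]) + r • iota α b) : ℍ[ℝ])) (G (r • iotaB α β)) β :=
    hasDerivAt_coe_comp (hg.comp_hasDerivAt β hcurve)
  rw [pB, h.deriv, map_smul, smul_eq_mul]

lemma DI_coe_comp_sphere (hg : HasFDerivAt g G ((t : ℍ[ℝ]) + r • iota α β)) :
    DI (fun a b => (g ((t : ℍ[ℝ]) + r • iota a b) : ℍ[ℝ])) α β
      = r • (G (iotaA α β) • (iotaA α β)⁻¹ + G (iotaB α β) • (iotaB α β)⁻¹) := by
  rw [DI, pA_coe_comp_sphere hg, pB_coe_comp_sphere hg, mul_coe_eq_smul, mul_coe_eq_smul,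
    smul_add, smul_smul, smul_smul]

end AngularDerivative

section Fueter

variable {f : ℍ[ℝ] → ℍ[ℝ]} {u w : ℍ[ℝ] → ℝ} {p : ℍ[ℝ]}

lemma differentiableAt_of_eventuallyEq_coe_add_smul_im
    (hf : DifferentiableAt ℝ f p) (hp : im p ≠ 0)
    (hfuw : f =ᶠ[𝓝 p] fun q => (u q : ℍ[ℝ]) + w q • im q) :
    DifferentiableAt ℝ u p ∧ DifferentiableAt ℝ w p := by
  have him : DifferentiableAt ℝ im p := imCLM.differentiableAt
  constructor
  · refine (reCLM.differentiableAt.comp p hf).congr_of_eventuallyEq ?_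
    filter_upwards [hfuw] with q hq
    rw [Function.comp_apply, reCLM_apply, hq, re_coe_add_smul_im]
  · have hproj : DifferentiableAt ℝ (fun q => inner ℝ (f q) (im q) * (‖im q‖ ^ 2)⁻¹) p :=
      (hf.inner ℝ him).fun_mul ((him.norm_sq ℝ).fun_inv (pow_ne_zero 2 (norm_ne_zero_iff.mpr hp)))
    refine hproj.congr_of_eventuallyEq ?_
    filter_upwards [hfuw, continuous_im.continuousAt.eventually_ne hp] with q hq hq0
    rw [hq, inner_coe_add_smul_im_im, mul_inv_cancel_right₀ (by positivity)]

lemma fderiv_coe_add_smul_im_apply (hu : DifferentiableAt ℝ u p) (hw : DifferentiableAt ℝ w p)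
    (d : ℍ[ℝ]) :
    fderiv ℝ (fun q => (u q : ℍ[ℝ]) + w q • im q) p d
      = (fderiv ℝ u p d : ℍ[ℝ]) + fderiv ℝ w p d • im p + w p • im d := by
  simp_rw [coe_eq_smul_one]
  have h : HasFDerivAt (fun q => u q • (1 : ℍ[ℝ]) + w q • im q) _ p :=
    (hu.hasFDerivAt.smul_const 1).fun_add (hw.hasFDerivAt.fun_smul imCLM.hasFDerivAt)
  rw [h.fderiv]
  simp [add_assoc, add_comm (w p • im d)]

lemma re_Dl (f : ℍ[ℝ] → ℍ[ℝ]) (p : ℍ[ℝ]) :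
    (Dl f p).re = (pt f p).re - (px f p).imI - (py f p).imJ - (pz f p).imK := by
  simp [Dl, sub_eq_add_neg]

lemma re_Dl_of_fderiv_apply {U W : ℍ[ℝ] →L[ℝ] ℝ} {c : ℝ}
    (h : ∀ d, fderiv ℝ f p d = (U d : ℍ[ℝ]) + W d • im p + c • im d) :
    (Dl f p).re = U 1 - W (im p) - 3 * c := by
  rw [re_Dl, pt, px, py, pz, h, h, h, h, map_eq_basis_of_re_eq_zero W (re_im p)]
  simp only [re_add, re_coe, re_smul, imI_add, imI_coe, imI_smul, imJ_add, imJ_coe, imJ_smul,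
    imK_add, imK_coe, imK_smul, im_one, re_im, imI_im, imJ_im, imK_im, imI_qi, imJ_qj, imK_qk,
    smul_zero, add_zero, smul_eq_mul]
  ring

lemma pt_eq_of_re_Dl (hu : DifferentiableAt ℝ u p) (hw : DifferentiableAt ℝ w p)
    (hfuw : f =ᶠ[𝓝 p] fun q => (u q : ℍ[ℝ]) + w q • im q) (hDl : (Dl f p).re = -2 * w p) :
    pt f p = ((fderiv ℝ w p (im p) + w p : ℝ) : ℍ[ℝ]) + fderiv ℝ w p 1 • im p := by
  have hdf (d : ℍ[ℝ]) :
      fderiv ℝ f p d = (fderiv ℝ u p d : ℍ[ℝ]) + fderiv ℝ w p d • im p + w p • im d := by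
    rw [hfuw.fderiv_eq, fderiv_coe_add_smul_im_apply hu hw]
  have hu_t : fderiv ℝ u p 1 = fderiv ℝ w p (im p) + w p := by
    linear_combination (re_Dl_of_fderiv_apply hdf).symm.trans hDl
  rw [pt, hdf, im_one, smul_zero, add_zero, hu_t]

lemma Dlbar_coe_of_hasFDerivAt {G : ℍ[ℝ] →L[ℝ] ℝ} (hw : HasFDerivAt w G p) :
    Dlbar (fun q => (w q : ℍ[ℝ])) p = (G 1 : ℍ[ℝ]) - gradIm G := by
  simp_rw [coe_eq_smul_one]
  simp [Dlbar, pt, px, py, pz, (hw.smul_const (1 : ℍ[ℝ])).fderiv, gradIm, sub_sub]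

end Fueter

/-- If `f` is `C²` on an open set `Ω` of quaternions with nonzero imaginary
part, of the form `f = u + ι v` with `u, v` real-valued, and `D_l f = -2v/r` on `Ω`, then at
`p = t + r ι(α,β) ∈ Ω` the conjugate left Fueter operator applied to `v/r` satisfies
`D̄_l(v/r) = -(ι/r) ∂f/∂t + (ι/r²) v + (1/r²) ∂v/∂ιₗ`. -/
theorem conjugate_fueter_of_v_over_r (Ω : Set ℍ[ℝ]) (hΩ : IsOpen Ω)
    (hΩim : ∀ p ∈ Ω, Quaternion.im p ≠ 0)
    (f : ℍ[ℝ] → ℍ[ℝ]) (hf : ContDiffOn ℝ 2 f Ω)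
    (u v : ℍ[ℝ] → ℝ)
    (hform : ∀ p ∈ Ω, f p = (u p : ℍ[ℝ]) + iot p * (v p : ℍ[ℝ]))
    (hDl : ∀ p ∈ Ω, Dl f p = ((-2 * v p / rad p : ℝ) : ℍ[ℝ]))
    (t r α β : ℝ) (hr : 0 < r) (hβ : Real.sin β ≠ 0)
    (p : ℍ[ℝ]) (hpdef : p = (t : ℍ[ℝ]) + r • iota α β) (hp : p ∈ Ω)
    (V : ℝ → ℝ → ℍ[ℝ])
    (hV : ∀ a b, V a b = ((v ((t : ℍ[ℝ]) + r • iota a b) : ℝ) : ℍ[ℝ])) :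
    Dlbar (fun q => ((v q / rad q : ℝ) : ℍ[ℝ])) p
      = -((r⁻¹ • iota α β) * pt f p)
        + (((r^2)⁻¹ : ℝ) • iota α β) * (v p : ℍ[ℝ])
        + ((r^2)⁻¹ : ℝ) • DI V α β := by
  set w : ℍ[ℝ] → ℝ := fun q => v q / rad q
  have hfuw : f =ᶠ[𝓝 p] fun q => (u q : ℍ[ℝ]) + w q • im q :=
    Filter.eventually_of_mem (hΩ.mem_nhds hp) fun q hq => by rw [hform q hq, iot_mul_coe]
  have hfd : DifferentiableAt ℝ f p :=
    (hf.contDiffAt (hΩ.mem_nhds hp)).differentiableAt (by norm_num)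
  obtain ⟨hu, hw⟩ := differentiableAt_of_eventuallyEq_coe_add_smul_im hfd (hΩim p hp) hfuw
  have hpt := pt_eq_of_re_Dl hu hw hfuw (by rw [hDl p hp, re_coe, mul_div_assoc])
  have hv (a b : ℝ) : v ((t : ℍ[ℝ]) + r • iota a b) = r * w ((t : ℍ[ℝ]) + r • iota a b) := by
    simp only [w, rad_coe_add_smul_iota t hr.le, mul_div_cancel₀ _ hr.ne']
  set W := fderiv ℝ w p
  have hW : HasFDerivAt w W ((t : ℍ[ℝ]) + r • iota α β) := hpdef ▸ hw.hasFDerivAt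
  have hDI := DI_coe_comp_sphere (hW.const_mul r)
  simp only [← hv, ← hV, FunLike.coe_smul, Pi.smul_apply, smul_eq_mul] at hDI
  rw [Dlbar_coe_of_hasFDerivAt hw.hasFDerivAt, hpt, hDI, hpdef, im_coe_add_smul_iota, hv,
    ← hpdef, sub_eq_add_neg, ← smul_inv_frame_sum_eq_neg_gradIm W α hβ, inv_iota, map_smul,
    smul_eq_mul]
  simp only [smul_mul_assoc, mul_smul_comm, mul_coe_eq_smul, mul_add, iota_mul_self, smul_neg]
  rw [coe_eq_smul_one]
  match_scalars <;> field_simp <;> ring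
end
end
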